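/- arXiv:cs/0009024 — 4 statements merged into one kernel-verified Lean document; each statement's English description precedes it below -/
import Mathlib

section
/- For any finite set S of n points in R^d, there exists a point p ∈ R^d whose Tukey depth with respect to S is at least ⌈n/(d+1)⌉. -/
/-!
Apply Helly's theorem to the convex hulls of the subsets of `S` that omit fewer than
`k = ⌈n/(d+1)⌉` of its points. Any `d + 1` of them omit at most `(d+1)(k-1) < n` points in
total, so they share a point of `S`; hence all of these hulls share a point `p`. If a closed
halfspace containing `p` held fewer than `k` points of `S`, the points outside it would form
one of these subsets, and its hull, containing `p`, would lie in the complementary open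
halfspace.
-/

open RealInnerProductSpace Finset Module

theorem Finset.exists_mem_forall_mem_of_sum_card_sdiff_lt {α : Type*} [DecidableEq α]
    {S : Finset α} {I : Finset (Finset α)} (h : ∑ T ∈ I, #(S \ T) < #S) :
    ∃ x ∈ S, ∀ T ∈ I, x ∈ T := by
  by_contra! hS
  have hcover : S ⊆ I.biUnion (S \ ·) := fun x hx => by
    obtain ⟨T, hT, hxT⟩ := hS x hx
    exact mem_biUnion.2 ⟨T, hT, mem_sdiff.2 ⟨hx, hxT⟩⟩
  exact (card_le_card hcover |>.trans card_biUnion_le).not_gt h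

theorem mul_natCeil_div_lt {K : Type*} [Field K] [LinearOrder K] [IsStrictOrderedRing K]
    [FloorSemiring K] (n m : ℕ) : (m + 1) * ⌈(n : K) / (m + 1)⌉₊ < n + (m + 1) := by
  have hm : (0 : K) < m + 1 := by positivity
  have hceil : (⌈(n : K) / (m + 1)⌉₊ : K) < n / (m + 1) + 1 :=
    Nat.ceil_lt_add_one (by positivity)
  have : ((m + 1) * ⌈(n : K) / (m + 1)⌉₊ : K) < n + (m + 1) := by
    calc ((m + 1) * ⌈(n : K) / (m + 1)⌉₊ : K) < (m + 1) * (n / (m + 1) + 1) := by gcongr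
      _ = n + (m + 1) := by field_simp
  exact_mod_cast this

section CenterRegion

variable {𝕜 E : Type*} [Semiring 𝕜] [PartialOrder 𝕜] [AddCommMonoid E] [Module 𝕜 E]
  [DecidableEq E]

variable (𝕜) in
def centerRegion (S : Finset E) (k : ℕ) : Set E :=
  ⋂ T ∈ S.powerset.filter (fun T => #(S \ T) < k), convexHull 𝕜 (T : Set E)

theorem le_card_filter_of_mem_centerRegion {S : Finset E} {k : ℕ} {p : E}
    (hp : p ∈ centerRegion 𝕜 S k) {K : Set E} [DecidablePred (· ∈ K)] (hpK : p ∈ K)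
    (hK : Convex 𝕜 Kᶜ) : k ≤ #(S.filter (· ∈ K)) := by
  by_contra! hlt
  have hout : S.filter (· ∉ K) ∈ S.powerset.filter (fun T => #(S \ T) < k) := by
    rw [mem_filter, mem_powerset, ← filter_not]
    simpa only [not_not, filter_subset, true_and] using hlt
  have hhull := convexHull_min (fun x hx => (mem_filter.1 hx).2) hK
    (Set.mem_iInter₂.1 hp _ hout)
  exact hhull hpK

end CenterRegion

theorem centerRegion_nonempty {𝕜 E : Type*} [Field 𝕜] [LinearOrder 𝕜] [IsStrictOrderedRing 𝕜]
    [AddCommGroup E] [Module 𝕜 E] [FiniteDimensional 𝕜 E] [DecidableEq E] (S : Finset E) {k : ℕ}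
    (hk : (finrank 𝕜 E + 1) * k < #S + (finrank 𝕜 E + 1)) :
    (centerRegion 𝕜 S k).Nonempty := by
  refine Convex.helly_theorem' (fun _ _ => convex_convexHull 𝕜 _) fun I hI hIcard => ?_
  rcases I.eq_empty_or_nonempty with rfl | ⟨T₀, hT₀⟩
  · simp
  have hsmall : ∀ T ∈ I, #(S \ T) < k := fun T hT => (mem_filter.1 (hI hT)).2
  have hk₁ : 1 ≤ k := (hsmall T₀ hT₀).trans_le' (Nat.zero_le _)
  have hsum : ∑ T ∈ I, #(S \ T) < #S := calc
    ∑ T ∈ I, #(S \ T) ≤ #I * (k - 1) :=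
      sum_le_card_nsmul _ _ _ fun T hT => Nat.le_sub_one_of_lt (hsmall T hT)
    _ ≤ (finrank 𝕜 E + 1) * (k - 1) := Nat.mul_le_mul_right _ hIcard
    _ < #S := by
      have := Nat.le_mul_of_pos_right (finrank 𝕜 E + 1) hk₁
      rw [Nat.mul_sub_one]; omega
  obtain ⟨x, -, hx⟩ := exists_mem_forall_mem_of_sum_card_sdiff_lt hsum
  exact ⟨x, Set.mem_biInter fun T hT => subset_convexHull 𝕜 _ (hx T hT)⟩

/-- Centerpoint theorem: for any finite set S of n points in ℝ^d there is a point p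
whose Tukey depth is at least ⌈n/(d+1)⌉, i.e. every closed halfspace containing p
contains at least ⌈n/(d+1)⌉ points of S. -/
theorem stmt6 (d : ℕ) (S : Finset (EuclideanSpace ℝ (Fin d))) :
    ∃ p : EuclideanSpace ℝ (Fin d),
      ∀ (v : EuclideanSpace ℝ (Fin d)) (c : ℝ), v ≠ 0 → c ≤ ⟪p, v⟫ →
        (⌈(S.card : ℚ) / (d + 1)⌉ : ℤ) ≤
          Set.ncard {s ∈ (S : Set (EuclideanSpace ℝ (Fin d))) | c ≤ ⟪s, v⟫} := by
  classical
  obtain ⟨p, hp⟩ := centerRegion_nonempty (𝕜 := ℝ) S (k := ⌈(S.card : ℚ) / (d + 1)⌉₊)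
    (by simpa only [finrank_euclideanSpace_fin] using mul_natCeil_div_lt (K := ℚ) #S d)
  refine ⟨p, fun v c _ hc => ?_⟩
  have hK : Convex ℝ {x : EuclideanSpace ℝ (Fin d) | c ≤ ⟪x, v⟫}ᶜ := by
    simpa only [Set.compl_ofPred, not_le] using
      convex_halfSpace_lt
        ⟨fun x y => inner_add_left x y v, fun r x => real_inner_smul_left x v r⟩ c
  have hdepth := le_card_filter_of_mem_centerRegion hp (K := {x | c ≤ ⟪x, v⟫}) hc hK
  rw [← Set.ncard_coe_finset (S.filter _), coe_filter] at hdepth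
  rw [← Int.natCast_ceil_eq_ceil (by positivity)]
  exact_mod_cast hdepth
end

section
/- Let S be a finite set of n points in R^2 in general position (no two sharing an x-coordinate). Then there exists a non-vertical line L such that for every vertical line V and every double wedge W bounded by L and V, the number of points of S contained in W is at least ⌈n/3⌉. -/
/-!
Order `S` by abscissa and cut it into consecutive blocks `A`, `M`, `B` with `#A = k - 1`, `#M = k`
and `#B ≥ k - 1`, where `k = ⌈n/3⌉`; let `X = A ∪ M` and `Y = M ∪ B`. The `k`-th smallest residual
`y - t x` on `X` and on `Y` is continuous in the slope `t`, and for very steep slopes the two are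
ordered according to the sign of `t`, because `M` holds the `k` rightmost points of `X` and the `k`
leftmost points of `Y`. So for some `t` they agree, with value `w` say, and then `X` and `Y` each
have at least `k` points on or below and at least `k` points on or above the line `y = t x + w`.
If the vertical line `x = x₀` does not separate two points of `M`, each double wedge contains the
points of `Y`, or of `X`, on one side of that line; if it does, the wedge contains the points of `A`
on one side, those of `B` on the other and those of `M` on the line, at least `k` in all by
counting inside `M`.
-/

open Finset

variable {ι : Type*}

/-- The `m`-th smallest value of `f` on `F`, counted with multiplicity; meaningful for
`1 ≤ m ≤ #F`. -/
noncomputable def kthSmallest (F : Finset ι) (f : ι → ℝ) (m : ℕ) : ℝ :=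
  sInf (({v ∈ F.image f | m ≤ #{p ∈ F | f p ≤ v}} : Finset ℝ) : Set ℝ)

section KthSmallest

variable {F : Finset ι} {f g : ι → ℝ} {m : ℕ} {v : ℝ}

theorem le_card_filter_le_kthSmallest (hm : m ≤ #F) :
    m ≤ #{p ∈ F | f p ≤ kthSmallest F f m} := by
  obtain rfl | hm₀ := m.eq_zero_or_pos
  · exact Nat.zero_le _
  obtain ⟨p, hp, hmax⟩ := F.exists_max_image f (card_pos.1 (hm₀.trans_le hm))
  have hne : ({v ∈ F.image f | m ≤ #{p ∈ F | f p ≤ v}}).Nonempty :=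
    ⟨f p, mem_filter.2 ⟨mem_image_of_mem f hp, by rwa [filter_true_of_mem hmax]⟩⟩
  rw [kthSmallest]
  exact (mem_filter.1 hne.csInf_mem).2

theorem kthSmallest_le_of_le_card (hm₀ : 0 < m) (h : m ≤ #{p ∈ F | f p ≤ v}) :
    kthSmallest F f m ≤ v := by
  obtain ⟨p, hp, hmax⟩ := exists_max_image _ f (card_pos.1 (hm₀.trans_le h))
  have hcand : f p ∈ ({v ∈ F.image f | m ≤ #{p ∈ F | f p ≤ v}}) :=
    mem_filter.2 ⟨mem_image_of_mem f (mem_filter.1 hp).1,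
      h.trans (card_le_card fun q hq => mem_filter.2 ⟨(mem_filter.1 hq).1, hmax q hq⟩)⟩
  rw [kthSmallest]
  exact (csInf_le (Finset.bddBelow _) hcand).trans (mem_filter.1 hp).2

theorem kthSmallest_le_iff (hm₀ : 0 < m) (hm : m ≤ #F) :
    kthSmallest F f m ≤ v ↔ m ≤ #{p ∈ F | f p ≤ v} :=
  ⟨fun h => (le_card_filter_le_kthSmallest hm).trans
    (card_le_card (monotone_filter_right _ fun _ _ hp => hp.trans h)),
   kthSmallest_le_of_le_card hm₀⟩

theorem le_kthSmallest_of_card_lt (hm : m ≤ #F) (h : #{p ∈ F | f p < v} < m) :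
    v ≤ kthSmallest F f m := by
  by_contra! hlt
  exact (le_card_filter_le_kthSmallest hm).not_gt <|
    (card_le_card (monotone_filter_right _ fun _ _ hp => hp.trans_lt hlt)).trans_lt h

theorem card_filter_lt_kthSmallest_lt (hm₀ : 0 < m) (hm : m ≤ #F) :
    #{p ∈ F | f p < kthSmallest F f m} < m := by
  obtain hW | hW := ({p ∈ F | f p < kthSmallest F f m}).eq_empty_or_nonempty
  · rwa [hW, card_empty]
  obtain ⟨p, hp, hmax⟩ := exists_max_image _ f hW
  have hlt : ¬ kthSmallest F f m ≤ f p := not_le.2 (mem_filter.1 hp).2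
  rw [kthSmallest_le_iff hm₀ hm, not_le] at hlt
  exact (card_le_card fun q hq => mem_filter.2 ⟨(mem_filter.1 hq).1, hmax q hq⟩).trans_lt hlt

theorem card_lt_add_card_filter_kthSmallest_le (hm₀ : 0 < m) (hm : m ≤ #F) :
    #F < m + #{p ∈ F | kthSmallest F f m ≤ f p} := by
  have hsplit := card_filter_add_card_filter_not (s := F) (fun p => f p < kthSmallest F f m)
  simp only [not_lt] at hsplit
  have := card_filter_lt_kthSmallest_lt (f := f) hm₀ hm
  omega

theorem kthSmallest_le_add (hm₀ : 0 < m) (hm : m ≤ #F) {c : ℝ} (h : ∀ p ∈ F, f p ≤ g p + c) :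
    kthSmallest F f m ≤ kthSmallest F g m + c :=
  kthSmallest_le_of_le_card hm₀ <| (le_card_filter_le_kthSmallest hm).trans <|
    card_le_card (monotone_filter_right _ fun p hp hle => (h p hp).trans (by linarith))

end KthSmallest

section Slope

variable {F : Finset ι} {x y g : ι → ℝ} {m : ℕ}

theorem continuous_kthSmallest_sub_mul (hm₀ : 0 < m) (hm : m ≤ #F) :
    Continuous fun t => kthSmallest F (fun p => y p - t * x p) m := by
  set K := F.sup fun p => ‖x p‖₊
  refine (LipschitzWith.of_le_add_mul K fun t s =>
    kthSmallest_le_add hm₀ hm fun p hp => ?_).continuous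
  have hx : |x p| ≤ K := by
    simpa only [← NNReal.coe_le_coe, coe_nnnorm, Real.norm_eq_abs] using
      le_sup (f := fun p => ‖x p‖₊) hp
  have hts : (s - t) * x p ≤ K * dist t s := by
    rw [Real.dist_eq, abs_sub_comm]
    calc (s - t) * x p ≤ |(s - t) * x p| := le_abs_self _
      _ = |s - t| * |x p| := abs_mul _ _
      _ ≤ K * |s - t| := by rw [mul_comm]; gcongr
  linarith

theorem le_kthSmallest_sub {c s : ℝ} (hm : m ≤ #F) (hy : ∀ p ∈ F, c ≤ y p)
    (hfew : #{p ∈ F | s < g p} < m) : c - s ≤ kthSmallest F (fun p => y p - g p) m :=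
  le_kthSmallest_of_card_lt hm <| (card_le_card <| monotone_filter_right _
    fun p hp hlt => by linarith [hy p hp]).trans_lt hfew

theorem kthSmallest_sub_le {c s : ℝ} (hm₀ : 0 < m) (hy : ∀ p ∈ F, y p ≤ c)
    (hmany : m ≤ #{p ∈ F | s ≤ g p}) : kthSmallest F (fun p => y p - g p) m ≤ c - s :=
  kthSmallest_le_of_le_card hm₀ <| hmany.trans <| card_le_card <| monotone_filter_right _
    fun p hp hle => by linarith [hy p hp]

theorem exists_slope_kthSmallest_eq {X Y : Finset ι} {a b : ℝ} (hab : a < b)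
    (hXgt : #{p ∈ X | a < x p} < m) (hXle : m ≤ #{p ∈ X | x p ≤ a})
    (hYlt : #{p ∈ Y | x p < b} < m) (hYge : m ≤ #{p ∈ Y | b ≤ x p}) :
    ∃ t, kthSmallest X (fun p => y p - t * x p) m =
      kthSmallest Y (fun p => y p - t * x p) m := by
  classical
  have hm₀ : 0 < m := (Nat.zero_le _).trans_lt hXgt
  have hX : m ≤ #X := hXle.trans (card_filter_le _ _)
  have hY : m ≤ #Y := hYge.trans (card_filter_le _ _)
  set C := ∑ p ∈ X ∪ Y, |y p|
  have hC₀ : 0 ≤ C := sum_nonneg fun p _ => abs_nonneg (y p)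
  have hC : ∀ p ∈ X ∪ Y, |y p| ≤ C := fun p hp =>
    single_le_sum (f := fun p => |y p|) (fun p _ => abs_nonneg _) hp
  have hyX := fun p hp => abs_le.1 (hC p (mem_union_left Y hp))
  have hyY := fun p hp => abs_le.1 (hC p (mem_union_right X hp))
  -- a slope steep enough that the vertical spread `2 * C` of the points no longer matters
  set T := (2 * C + 1) / (b - a)
  have hT : 0 ≤ T := div_nonneg (by linarith) (by linarith)
  have hTba : T * (b - a) = 2 * C + 1 := div_mul_cancel₀ _ (by linarith)
  set G := fun t => kthSmallest X (fun p => y p - t * x p) m -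
    kthSmallest Y (fun p => y p - t * x p) m
  have hGT : 0 ≤ G T := by
    have hXT := le_kthSmallest_sub (g := fun p => T * x p) (s := T * a) hX
      (fun p hp => (hyX p hp).1) ((card_le_card <| monotone_filter_right _
        fun p _ h => lt_of_mul_lt_mul_left h hT).trans_lt hXgt)
    have hYT := kthSmallest_sub_le (g := fun p => T * x p) (s := T * b) hm₀
      (fun p hp => (hyY p hp).2)
      (hYge.trans <| card_le_card <| monotone_filter_right _ fun p _ h => by gcongr)
    simp only [G]
    linarith
  have hGneg : G (-T) ≤ 0 := by
    have hXT := kthSmallest_sub_le (g := fun p => -T * x p) (s := -T * a) hm₀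
      (fun p hp => (hyX p hp).2)
      (hXle.trans <| card_le_card <| monotone_filter_right _ fun p _ h => by nlinarith)
    have hYT := le_kthSmallest_sub (g := fun p => -T * x p) (s := -T * b) hY
      (fun p hp => (hyY p hp).1)
      ((card_le_card <| monotone_filter_right _ fun p _ h => by nlinarith).trans_lt hYlt)
    simp only [G]
    linarith
  have hG : Continuous G := (continuous_kthSmallest_sub_mul hm₀ hX).sub
    (continuous_kthSmallest_sub_mul hm₀ hY)
  obtain ⟨t, -, ht⟩ := intermediate_value_Icc (neg_le_self hT) hG.continuousOn ⟨hGneg, hGT⟩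
  exact ⟨t, sub_eq_zero.1 ht⟩

end Slope

def HasWedgeDepth (S : Finset ι) (x y : ι → ℝ) (k : ℕ) (a b : ℝ) : Prop :=
  ∀ x₀, k ≤ #{p ∈ S | 0 ≤ (y p - (a * x p + b)) * (x p - x₀)} ∧
    k ≤ #{p ∈ S | (y p - (a * x p + b)) * (x p - x₀) ≤ 0}

theorem exists_hasWedgeDepth_of_le_one {S : Finset ι} {x y : ι → ℝ} {k : ℕ} (hk : k ≤ 1)
    (hkS : k ≤ #S) : ∃ a b, HasWedgeDepth S x y k a b := by
  obtain rfl | rfl : k = 0 ∨ k = 1 := by omega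
  · exact ⟨0, 0, fun _ => ⟨Nat.zero_le _, Nat.zero_le _⟩⟩
  obtain ⟨p₀, hp₀⟩ := card_pos.1 hkS
  exact ⟨0, y p₀, fun x₀ =>
    ⟨card_pos.2 ⟨p₀, by simp [hp₀]⟩, card_pos.2 ⟨p₀, by simp [hp₀]⟩⟩⟩

theorem disjoint_of_forall_lt {s t : Finset ι} {x : ι → ℝ} (h : ∀ a ∈ s, ∀ b ∈ t, x a < x b) :
    Disjoint s t :=
  disjoint_left.2 fun a ha hat => (h a ha a hat).false

section Blocks

variable [DecidableEq ι] {S A M B : Finset ι} {x y ρ : ι → ℝ} {k : ℕ}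

theorem card_filter_le_add_card_filter_ge (s : Finset ι) (f : ι → ℝ) (w : ℝ) :
    #{p ∈ s | f p ≤ w} + #{p ∈ s | w ≤ f p} = #s + #{p ∈ s | f p = w} := by
  rw [← card_union_add_card_inter, ← filter_or, ← filter_and]
  simp only [le_total, filter_true, ← le_antisymm_iff]

theorem card_filter_union_of_disjoint {s t : Finset ι} (h : Disjoint s t) (P : ι → Prop)
    [DecidablePred P] : #{p ∈ s ∪ t | P p} = #{p ∈ s | P p} + #{p ∈ t | P p} := by
  rw [filter_union, card_union_of_disjoint (disjoint_filter_filter h)]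

theorem le_card_filter_wedge {w : ℝ}
    (hAM : ∀ a ∈ A, ∀ q ∈ M, x a < x q) (hMB : ∀ q ∈ M, ∀ b ∈ B, x q < x b)
    (hAB : ∀ a ∈ A, ∀ b ∈ B, x a < x b) (hM : #M ≤ k)
    (hX : k ≤ #{p ∈ A ∪ M | ρ p ≤ w}) (hY : k ≤ #{p ∈ M ∪ B | w ≤ ρ p}) (x₀ : ℝ) :
    k ≤ #{p ∈ A ∪ M ∪ B | 0 ≤ (ρ p - w) * (x p - x₀)} := by
  have hdAM := disjoint_of_forall_lt hAM
  have hdMB := disjoint_of_forall_lt hMB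
  have hdAB := disjoint_of_forall_lt hAB
  by_cases hright : ∀ p ∈ M ∪ B, x₀ ≤ x p
  · refine hY.trans (card_le_card fun p hp => ?_)
    obtain ⟨hpY, hρ⟩ := mem_filter.1 hp
    exact mem_filter.2 ⟨union_assoc A M B ▸ mem_union_right A hpY,
      mul_nonneg (by linarith) (by linarith [hright p hpY])⟩
  by_cases hleft : ∀ p ∈ A ∪ M, x p ≤ x₀
  · refine hX.trans (card_le_card fun p hp => ?_)
    obtain ⟨hpX, hρ⟩ := mem_filter.1 hp
    exact mem_filter.2 ⟨mem_union_left B hpX,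
      mul_nonneg_of_nonpos_of_nonpos (by linarith) (by linarith [hleft p hpX])⟩
  push Not at hright hleft
  obtain ⟨r, hr, hrx⟩ := hright
  obtain ⟨l, hl, hlx⟩ := hleft
  have hA : ∀ a ∈ A, x a ≤ x₀ := fun a ha => by
    rcases mem_union.1 hr with hr | hr
    · linarith [hAM a ha r hr]
    · linarith [hAB a ha r hr]
  have hB : ∀ b ∈ B, x₀ ≤ x b := fun b hb => by
    rcases mem_union.1 hl with hl | hl
    · linarith [hAB l hl b hb]
    · linarith [hMB l hl b hb]
  have hwedge : #{p ∈ A | ρ p ≤ w} + #{p ∈ M | ρ p = w} + #{p ∈ B | w ≤ ρ p} ≤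
      #{p ∈ A ∪ M ∪ B | 0 ≤ (ρ p - w) * (x p - x₀)} := by
    rw [card_filter_union_of_disjoint (disjoint_union_left.2 ⟨hdAB, hdMB⟩),
      card_filter_union_of_disjoint hdAM]
    refine add_le_add (add_le_add ?_ ?_) ?_ <;>
      refine card_le_card (monotone_filter_right _ fun p hp hρ => ?_)
    · exact mul_nonneg_of_nonpos_of_nonpos (by linarith) (by linarith [hA p hp])
    · simp [hρ]
    · exact mul_nonneg (by linarith) (by linarith [hB p hp])
  have := card_filter_le_add_card_filter_ge M ρ w
  rw [card_filter_union_of_disjoint hdAM] at hX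
  rw [card_filter_union_of_disjoint hdMB] at hY
  omega

theorem exists_leftmost_subset_card_eq (hx : Set.InjOn x S) {c : ℕ} (hc : c ≤ #S) :
    ∃ A ⊆ S, #A = c ∧ ∀ a ∈ A, ∀ q ∈ S \ A, x a < x q := by
  induction c with
  | zero => exact ⟨∅, empty_subset _, card_empty, by simp⟩
  | succ c ih =>
    obtain ⟨A, hAS, hA, hlt⟩ := ih (by omega)
    obtain ⟨q₀, hq₀, hmin⟩ := (S \ A).exists_min_image x
      (by rw [← card_pos, card_sdiff_of_subset hAS]; omega)
    obtain ⟨hq₀S, hq₀A⟩ := mem_sdiff.1 hq₀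
    refine ⟨insert q₀ A, insert_subset hq₀S hAS, by rw [card_insert_of_notMem hq₀A, hA], ?_⟩
    intro a ha q hq
    rw [mem_sdiff, mem_insert, not_or] at hq
    obtain ⟨hqS, hqq₀, hqA⟩ := hq
    rcases mem_insert.1 ha with rfl | ha
    · exact (hmin q (mem_sdiff.2 ⟨hqS, hqA⟩)).lt_of_ne fun h => hqq₀ (hx hqS hq₀S h.symm)
    · exact hlt a ha q (mem_sdiff.2 ⟨hqS, hqA⟩)

theorem exists_three_blocks (hx : Set.InjOn x S) {α μ β : ℕ} (hS : α + μ + β = #S) :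
    ∃ A M B : Finset ι, S = A ∪ M ∪ B ∧ #A = α ∧ #M = μ ∧ #B = β ∧
      (∀ a ∈ A, ∀ q ∈ M, x a < x q) ∧ (∀ q ∈ M, ∀ b ∈ B, x q < x b) ∧
      (∀ a ∈ A, ∀ b ∈ B, x a < x b) := by
  obtain ⟨A, hAS, hA, hAlt⟩ := exists_leftmost_subset_card_eq hx (c := α) (by omega)
  obtain ⟨M, hMS, hM, hMlt⟩ := exists_leftmost_subset_card_eq (hx.mono sdiff_subset)
    (c := μ) (by rw [card_sdiff_of_subset hAS]; omega)
  have hAMS : A ∪ M ⊆ S := union_subset hAS (hMS.trans sdiff_subset)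
  have hdAM : Disjoint A M := disjoint_of_subset_right hMS disjoint_sdiff
  refine ⟨A, M, (S \ A) \ M, ?_, hA, hM, ?_, fun a ha q hq => hAlt a ha q (hMS hq),
    fun q hq b hb => hMlt q hq b hb, fun a ha b hb => hAlt a ha b (sdiff_subset hb)⟩
  · rw [sdiff_sdiff_left, sup_eq_union, union_sdiff_of_subset hAMS]
  · rw [sdiff_sdiff_left, sup_eq_union, card_sdiff_of_subset hAMS, card_union_of_disjoint hdAM]
    omega

theorem card_filter_union_gt_lt (hAM : ∀ a ∈ A, ∀ q ∈ M, x a < x q) {q : ι} (hq : q ∈ M) :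
    #{p ∈ A ∪ M | x q < x p} < #M := by
  refine (card_le_card fun p hp => ?_).trans_lt (card_erase_lt_of_mem hq)
  obtain ⟨hpX, hlt⟩ := mem_filter.1 hp
  rcases mem_union.1 hpX with hpA | hpM
  · exact absurd (hAM p hpA q hq) hlt.not_gt
  · exact mem_erase.2 ⟨by rintro rfl; exact hlt.false, hpM⟩

theorem card_add_one_le_card_filter_union_le (hAM : ∀ a ∈ A, ∀ q ∈ M, x a < x q) {q : ι}
    (hq : q ∈ M) : #A + 1 ≤ #{p ∈ A ∪ M | x p ≤ x q} := by
  rw [← card_insert_of_notMem fun h => (hAM q h q hq).false]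
  exact card_le_card (insert_subset (mem_filter.2 ⟨mem_union_right A hq, le_rfl⟩)
    fun p hp => mem_filter.2 ⟨mem_union_left M hp, (hAM p hp q hq).le⟩)

theorem card_filter_union_lt_lt (hMB : ∀ q ∈ M, ∀ b ∈ B, x q < x b) {q : ι} (hq : q ∈ M) :
    #{p ∈ M ∪ B | x p < x q} < #M := by
  simpa only [union_comm M B, neg_lt_neg_iff] using
    card_filter_union_gt_lt (x := fun p => -x p) (fun b hb q hq => neg_lt_neg (hMB q hq b hb)) hq

theorem card_add_one_le_card_filter_union_ge (hMB : ∀ q ∈ M, ∀ b ∈ B, x q < x b) {q : ι}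
    (hq : q ∈ M) : #B + 1 ≤ #{p ∈ M ∪ B | x q ≤ x p} := by
  simpa only [union_comm M B, neg_le_neg_iff] using card_add_one_le_card_filter_union_le
    (x := fun p => -x p) (fun b hb q hq => neg_lt_neg (hMB q hq b hb)) hq

theorem hasWedgeDepth_of_kthSmallest_eq
    (hAM : ∀ a ∈ A, ∀ q ∈ M, x a < x q) (hMB : ∀ q ∈ M, ∀ b ∈ B, x q < x b)
    (hAB : ∀ a ∈ A, ∀ b ∈ B, x a < x b) (hM : #M = k) (hA : k ≤ #A + 1) (hB : k ≤ #B + 1)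
    {t : ℝ} (ht : kthSmallest (A ∪ M) (fun p => y p - t * x p) k =
      kthSmallest (M ∪ B) (fun p => y p - t * x p) k) :
    HasWedgeDepth (A ∪ M ∪ B) x y k t (kthSmallest (A ∪ M) (fun p => y p - t * x p) k) := by
  intro x₀
  obtain rfl | hk₀ := k.eq_zero_or_pos
  · simp
  set r := fun p => y p - t * x p
  set w := kthSmallest (A ∪ M) r k
  have hcX : #(A ∪ M) = #A + k := by rw [card_union_of_disjoint (disjoint_of_forall_lt hAM), hM]
  have hcY : #(M ∪ B) = k + #B := by rw [card_union_of_disjoint (disjoint_of_forall_lt hMB), hM]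
  have hX₁ : k ≤ #{p ∈ A ∪ M | r p ≤ w} := le_card_filter_le_kthSmallest (by omega)
  have hY₁ : k ≤ #{p ∈ M ∪ B | r p ≤ w} := ht ▸ le_card_filter_le_kthSmallest (by omega)
  have hX₂ : k ≤ #{p ∈ A ∪ M | w ≤ r p} := by
    have : #(A ∪ M) < k + #{p ∈ A ∪ M | w ≤ r p} :=
      card_lt_add_card_filter_kthSmallest_le hk₀ (by omega)
    omega
  have hY₂ : k ≤ #{p ∈ M ∪ B | w ≤ r p} := by
    have : #(M ∪ B) < k + #{p ∈ M ∪ B | w ≤ r p} :=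
      ht ▸ card_lt_add_card_filter_kthSmallest_le hk₀ (by omega)
    omega
  constructor
  · simpa only [r, sub_sub] using le_card_filter_wedge hAM hMB hAB hM.le hX₁ hY₂ x₀
  · have := le_card_filter_wedge (ρ := fun p => -r p) (w := -w) hAM hMB hAB hM.le
      (by simpa only [neg_le_neg_iff] using hX₂) (by simpa only [neg_le_neg_iff] using hY₁) x₀
    refine this.trans_eq (congrArg card (filter_congr fun p _ => ?_))
    rw [show (-r p - -w) * (x p - x₀) = -((y p - (t * x p + w)) * (x p - x₀)) by ring,
      neg_nonneg]

theorem exists_hasWedgeDepth_of_two_le (hx : Set.InjOn x S) (hk : 2 ≤ k)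
    (hkS : 3 * k ≤ #S + 2) : ∃ a b, HasWedgeDepth S x y k a b := by
  obtain ⟨A, M, B, hS, hA, hM, hB, hAM, hMB, hAB⟩ :=
    exists_three_blocks hx (α := k - 1) (μ := k) (β := #S - (2 * k - 1)) (by omega)
  suffices ∀ p ∈ M, ∀ q ∈ M, x p < x q → ∃ a b, HasWedgeDepth S x y k a b by
    obtain ⟨p, hp, q, hq, hpq⟩ := one_lt_card.1 (by omega : 1 < #M)
    rcases (hx.ne (by simp [hS, hp]) (by simp [hS, hq]) hpq).lt_or_gt with h | h
    exacts [this p hp q hq h, this q hq p hp h]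
  intro p hp q hq hpq
  have hXle := card_add_one_le_card_filter_union_le hAM hp
  have hYge := card_add_one_le_card_filter_union_ge hMB hq
  obtain ⟨t, ht⟩ := exists_slope_kthSmallest_eq (y := y) hpq
    (hM ▸ card_filter_union_gt_lt hAM hp) (by omega)
    (hM ▸ card_filter_union_lt_lt hMB hq) (by omega)
  rw [hS]
  exact ⟨t, _, hasWedgeDepth_of_kthSmallest_eq hAM hMB hAB hM (by omega) (by omega) ht⟩

theorem exists_hasWedgeDepth (hx : Set.InjOn x S) (hkS : 3 * k ≤ #S + 2) :
    ∃ a b, HasWedgeDepth S x y k a b := by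
  rcases le_or_gt k 1 with hk | hk
  · exact exists_hasWedgeDepth_of_le_one hk (by omega)
  · exact exists_hasWedgeDepth_of_two_le hx hk hkS

end Blocks

theorem ceil_natCast_div_three (n : ℕ) : ⌈(n : ℚ) / 3⌉ = ((n + 2) / 3 : ℕ) := by
  have := Rat.ceil_natCast_div_natCast n 3
  push_cast at this ⊢
  omega

theorem ncard_sep_coe_finset (s : Finset ι) (P : ι → Prop) [DecidablePred P] :
    {p ∈ (s : Set ι) | P p}.ncard = #{p ∈ s | P p} := by
  rw [← Set.ncard_coe_finset, coe_filter]
  rfl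

/-- Catline depth guarantee: for n points in ℝ², no two sharing an x-coordinate,
there is a non-vertical line L (y = a·x + b) such that every closed double wedge
bounded by L and a vertical line x = x₀ (i.e. either of the two regions
{p : (p₂ - (a p₁ + b))·(p₁ - x₀) ≥ 0} and {p : (p₂ - (a p₁ + b))·(p₁ - x₀) ≤ 0})
contains at least ⌈n/3⌉ points of S. -/
theorem stmt7 (S : Finset (EuclideanSpace ℝ (Fin 2)))
    (hgen : ∀ p ∈ S, ∀ q ∈ S, p ≠ q → p 0 ≠ q 0) :
    ∃ a b : ℝ, ∀ x₀ : ℝ,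
      (⌈(S.card : ℚ) / 3⌉ : ℤ) ≤
        Set.ncard {p ∈ (S : Set (EuclideanSpace ℝ (Fin 2))) |
          0 ≤ (p 1 - (a * p 0 + b)) * (p 0 - x₀)} ∧
      (⌈(S.card : ℚ) / 3⌉ : ℤ) ≤
        Set.ncard {p ∈ (S : Set (EuclideanSpace ℝ (Fin 2))) |
          (p 1 - (a * p 0 + b)) * (p 0 - x₀) ≤ 0} := by
  classical
  have hx : Set.InjOn (fun p : EuclideanSpace ℝ (Fin 2) => p 0) S :=
    fun p hp q hq hpq => by_contra fun hne => hgen p hp q hq hne hpq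
  obtain ⟨a, b, hab⟩ :=
    exists_hasWedgeDepth (y := fun p => p 1) (k := (#S + 2) / 3) hx (by omega)
  refine ⟨a, b, fun x₀ => ?_⟩
  simp only [ceil_natCast_div_three, ncard_sep_coe_finset, Nat.cast_le]
  exact hab x₀
end

section
/- For finite sets, the minimum coverage number computed recursively on a binary decomposition tree is correct: if each leaf cell C has coverage count equal to the number of sets directly assigned to ancestors of C (including C itself), then the minimum over leaves of these counts equals the minimum over points of the number of sets covering that point, provided each set in the family is exactly the disjoint union of the cells it is assigned to. -/
/-!
Every point lies in exactly one leaf cell, and a set `F i` contains a point of the cell of `l`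
exactly when one of its assigned nodes is an ancestor of `l`; so the number of sets covering
`x` is the coverage count of the leaf containing `x`. Since every cell is nonempty, the map
sending a point to its leaf is onto, and both minima are taken over the same set of values.
-/

section LeafPartition

variable {X ι N : Type*} {cells : ι → Set X}

lemma eq_of_mem_of_mem_of_pairwise_disjoint (hdisj : Pairwise (Function.onFun Disjoint cells))
    {l l' : ι} {x : X} (hx : x ∈ cells l) (hx' : x ∈ cells l') : l = l' := by
  by_contra hne
  exact Set.disjoint_left.mp (hdisj hne) hx hx'

lemma mem_iUnion_regions_iff [DecidableEq N] (hdisj : Pairwise (Function.onFun Disjoint cells))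
    (anc : ι → Finset N) (A : Finset N) {l : ι} {x : X} (hx : x ∈ cells l) :
    x ∈ ⋃ n ∈ A, ⋃ l' ∈ {l' | n ∈ anc l'}, cells l' ↔ (A ∩ anc l).Nonempty := by
  simp only [Set.mem_iUnion, Set.mem_ofPred_eq, Finset.Nonempty, Finset.mem_inter]
  constructor
  · rintro ⟨n, hnA, l', hnl', hx'⟩
    obtain rfl := eq_of_mem_of_mem_of_pairwise_disjoint hdisj hx hx'
    exact ⟨n, hnA, hnl'⟩
  · rintro ⟨n, hnA, hnl⟩
    exact ⟨n, hnA, l, hnl, hx⟩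

end LeafPartition

lemma setOf_exists_eq_eq_range {α β : Type*} (f : α → β) :
    {c | ∃ a, c = f a} = Set.range f := by
  ext c
  simp only [Set.mem_ofPred_eq, Set.mem_range, eq_comm]

theorem stmt15_general {X N ι : Type*} [DecidableEq N] (m : ℕ)
    (cells : ι → Set X) (anc : ι → Finset N)
    (F : Fin m → Set X) (asg : Fin m → Finset N)
    (hne : ∀ l, (cells l).Nonempty)
    (hdisj : Pairwise (Function.onFun Disjoint cells))
    (hcover : ⋃ l, cells l = Set.univ)
    (hrep : ∀ i, F i = ⋃ n ∈ asg i, ⋃ l ∈ {l | n ∈ anc l}, cells l) :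
    sInf {c : ℕ | ∃ l : ι, c = Set.ncard {i : Fin m | ((asg i) ∩ (anc l)).Nonempty}} =
      sInf {c : ℕ | ∃ x : X, c = Set.ncard {i : Fin m | x ∈ F i}} := by
  choose leaf hleaf using fun x => Set.mem_iUnion.mp (hcover ▸ Set.mem_univ x)
  have leaf_surjective : leaf.Surjective := fun l =>
    let ⟨x, hx⟩ := hne l
    ⟨x, eq_of_mem_of_mem_of_pairwise_disjoint hdisj (hleaf x) hx⟩
  have covering_eq : ∀ x, {i | x ∈ F i} = {i | (asg i ∩ anc (leaf x)).Nonempty} := fun x => by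
    ext i
    rw [Set.mem_ofPred_eq, hrep i, mem_iUnion_regions_iff hdisj anc (asg i) (hleaf x)]
    rfl
  simp_rw [setOf_exists_eq_eq_range, covering_eq]
  exact congrArg sInf (leaf_surjective.range_comp _).symm

/-- Correctness of the recursive coverage-number computation on a decomposition tree.
The space X is partitioned into nonempty leaf cells (indexed by ι, with tree nodes
indexed by N); `anc l` is the set of ancestor-or-self nodes of leaf l; the region of a
node n is the union of the cells of leaves having n as ancestor.  Each set `F i` of a
finite family is assigned to nodes `asg i`, and equals the disjoint union of the
regions of its assigned nodes.  Then the minimum over leaves of the coverage count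
(number of sets assigned to some ancestor-or-self node of the leaf) equals the
minimum over points of X of the number of sets of the family covering the point. -/
theorem stmt15 {X N ι : Type*} [Fintype N] [DecidableEq N] [Fintype ι] [Nonempty ι] (m : ℕ)
    (cells : ι → Set X) (anc : ι → Finset N)
    (F : Fin m → Set X) (asg : Fin m → Finset N)
    (hne : ∀ l, (cells l).Nonempty)
    (hdisj : Pairwise (Function.onFun Disjoint cells))
    (hcover : ⋃ l, cells l = Set.univ)
    (hrep : ∀ i, F i = ⋃ n ∈ asg i, ⋃ l ∈ {l | n ∈ anc l}, cells l)
    (hrepdisj : ∀ i, ((asg i : Set N)).PairwiseDisjoint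
      (fun n => ⋃ l ∈ {l | n ∈ anc l}, cells l)) :
    sInf {c : ℕ | ∃ l : ι, c = Set.ncard {i : Fin m | ((asg i) ∩ (anc l)).Nonempty}} =
      sInf {c : ℕ | ∃ x : X, c = Set.ncard {i : Fin m | x ∈ F i}} :=
  stmt15_general m cells anc F asg hne hdisj hcover hrep
end

section
/- The regression depth of a non-vertical hyperplane H with respect to a finite point set S in R^d equals the minimum, over all hyperplanes V containing the vertical direction e_d, of the minimum number of points of S contained in either of the two closed double wedges bounded by H and V. -/
open RealInnerProductSpace

/-!
Along any admissible motion `(W t, C t)` the function `t ↦ ⟪s, W t⟫ - C t` is continuous, so by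
the intermediate value theorem every point `s` in the closed double wedge
`(⟪s, w⟫ - c) * (⟪s, W 1⟫ - C 1) ≤ 0` is crossed; hence the depth is at least the smallest wedge
count. Conversely, the straight-line motion `((1 - t) • w + t • v, (1 - t) * c + t * c')` from `H`
to a vertical `V` crosses exactly the points of that wedge, and never passes through a zero normal
because `w` has a nonzero last coordinate while `v` does not. The opposite wedge is obtained by
replacing `(v, c')` with `(-v, -c')`.
-/

theorem Nat.sInf_eq_of_subset_of_forall_exists_le {A B : Set ℕ} (hBA : B ⊆ A)
    (hAB : ∀ a ∈ A, ∃ b ∈ B, b ≤ a) : sInf A = sInf B := by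
  rcases A.eq_empty_or_nonempty with rfl | hA
  · rw [Set.subset_empty_iff.mp hBA]
  obtain ⟨b, hb, hba⟩ := hAB _ (Nat.sInf_mem hA)
  exact le_antisymm (Nat.sInf_le (hBA (Nat.sInf_mem ⟨b, hb⟩))) ((Nat.sInf_le hb).trans hba)

theorem exists_mem_Icc_eq_zero_of_mul_nonpos {f : ℝ → ℝ} (hf : ContinuousOn f (Set.Icc 0 1))
    (h : f 0 * f 1 ≤ 0) : ∃ t ∈ Set.Icc (0 : ℝ) 1, f t = 0 := by
  rcases mul_nonpos_iff.mp h with ⟨h0, h1⟩ | ⟨h0, h1⟩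
  · exact intermediate_value_Icc' zero_le_one hf ⟨h1, h0⟩
  · exact intermediate_value_Icc zero_le_one hf ⟨h0, h1⟩

theorem exists_mem_Icc_segment_eq_zero_iff (a b : ℝ) :
    (∃ t ∈ Set.Icc (0 : ℝ) 1, (1 - t) * a + t * b = 0) ↔ a * b ≤ 0 := by
  constructor
  · rintro ⟨t, ⟨ht0, ht1⟩, heq⟩
    have hab : a * b = -((1 - t) * (a * a) + t * (b * b)) := by linear_combination (a + b) * heq
    nlinarith [mul_self_nonneg a, mul_self_nonneg b]
  · intro h
    exact exists_mem_Icc_eq_zero_of_mul_nonpos (f := fun t => (1 - t) * a + t * b) (by fun_prop)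
      (by simpa using h)

section Motion

variable {E : Type*} [NormedAddCommGroup E] [InnerProductSpace ℝ E]

theorem exists_mem_Icc_inner_eq_of_mul_nonpos {W : ℝ → E} {C : ℝ → ℝ} (hW : Continuous W)
    (hC : Continuous C) {s : E} (hs : (⟪s, W 0⟫ - C 0) * (⟪s, W 1⟫ - C 1) ≤ 0) :
    ∃ t ∈ Set.Icc (0 : ℝ) 1, ⟪s, W t⟫ = C t := by
  obtain ⟨t, ht, h⟩ := exists_mem_Icc_eq_zero_of_mul_nonpos
    ((continuous_const.inner hW).sub hC).continuousOn hs
  exact ⟨t, ht, sub_eq_zero.mp h⟩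

theorem exists_mem_Icc_inner_segment_eq_iff (s w v : E) (c c' : ℝ) :
    (∃ t ∈ Set.Icc (0 : ℝ) 1, ⟪s, (1 - t) • w + t • v⟫ = (1 - t) * c + t * c') ↔
      (⟪s, w⟫ - c) * (⟪s, v⟫ - c') ≤ 0 := by
  rw [← exists_mem_Icc_segment_eq_zero_iff]
  refine exists_congr fun t => and_congr_right fun _ => ?_
  rw [inner_add_right, real_inner_smul_right, real_inner_smul_right]
  constructor <;> intro h <;> linarith

theorem segment_ne_zero_of_apply_ne_zero {f : E →ₗ[ℝ] ℝ} {w v : E} (hw : f w ≠ 0) (hv : v ≠ 0)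
    (hfv : f v = 0) (t : ℝ) : (1 - t) • w + t • v ≠ 0 := by
  intro h
  rcases eq_or_ne t 1 with rfl | ht
  · exact hv (by simpa using h)
  · have := congrArg f h
    simp only [map_add, map_smul, hfv, smul_eq_mul, mul_zero, add_zero, map_zero] at this
    exact ht (by linarith [(mul_eq_zero.mp this).resolve_right hw])

theorem exists_motion_crossing_iff {f : E →ₗ[ℝ] ℝ} {w v : E} (hw : f w ≠ 0) (hv : v ≠ 0)
    (hfv : f v = 0) (c c' : ℝ) :
    ∃ (W : ℝ → E) (C : ℝ → ℝ), Continuous W ∧ Continuous C ∧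
      (∀ t ∈ Set.Icc (0 : ℝ) 1, W t ≠ 0) ∧ W 0 = w ∧ C 0 = c ∧ f (W 1) = 0 ∧
      ∀ s, (∃ t ∈ Set.Icc (0 : ℝ) 1, ⟪s, W t⟫ = C t) ↔ (⟪s, w⟫ - c) * (⟪s, v⟫ - c') ≤ 0 :=
  ⟨fun t => (1 - t) • w + t • v, fun t => (1 - t) * c + t * c', by fun_prop, by fun_prop,
    fun t _ => segment_ne_zero_of_apply_ne_zero hw hv hfv t, by simp, by simp, by simpa using hfv,
    fun s => exists_mem_Icc_inner_segment_eq_iff s w v c c'⟩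

end Motion

/-- The regression depth of a non-vertical hyperplane H = {x : ⟪x,w⟫ = c} with respect
to a finite point set S ⊆ ℝ^d — the minimum number of points of S crossed by any
continuous motion (W t, C t) of the hyperplane taking it to a vertical hyperplane
(one whose normal is orthogonal to the last coordinate direction e_d) — equals the
minimum, over all vertical hyperplanes V = {x : ⟪x,v⟫ = c'}, of the minimum number
of points of S in either of the two closed double wedges
{s : (⟪s,w⟫-c)(⟪s,v⟫-c') ≥ 0} and {s : (⟪s,w⟫-c)(⟪s,v⟫-c') ≤ 0} bounded by H and V. -/
theorem stmt18 (d : ℕ) (hd : 1 ≤ d) (S : Finset (EuclideanSpace ℝ (Fin d)))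
    (w : EuclideanSpace ℝ (Fin d)) (c : ℝ) (hw : w ⟨d - 1, by omega⟩ ≠ 0) :
    sInf {m : ℕ | ∃ (W : ℝ → EuclideanSpace ℝ (Fin d)) (C : ℝ → ℝ),
        Continuous W ∧ Continuous C ∧ (∀ t ∈ Set.Icc (0:ℝ) 1, W t ≠ 0) ∧
        W 0 = w ∧ C 0 = c ∧ W 1 ⟨d - 1, by omega⟩ = 0 ∧
        m = Set.ncard {s ∈ (S : Set (EuclideanSpace ℝ (Fin d))) |
          ∃ t ∈ Set.Icc (0:ℝ) 1, ⟪s, W t⟫ = C t}} =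
    sInf {m : ℕ | ∃ (v : EuclideanSpace ℝ (Fin d)) (c' : ℝ), v ≠ 0 ∧
        v ⟨d - 1, by omega⟩ = 0 ∧
        (m = Set.ncard {s ∈ (S : Set (EuclideanSpace ℝ (Fin d))) |
            0 ≤ (⟪s, w⟫ - c) * (⟪s, v⟫ - c')} ∨
         m = Set.ncard {s ∈ (S : Set (EuclideanSpace ℝ (Fin d))) |
            (⟪s, w⟫ - c) * (⟪s, v⟫ - c') ≤ 0})} := by
  set f := EuclideanSpace.projₗ (𝕜 := ℝ) (⟨d - 1, by omega⟩ : Fin d)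
  apply Nat.sInf_eq_of_subset_of_forall_exists_le
  · rintro m ⟨v, c', hv, hfv, rfl | rfl⟩
    · obtain ⟨W, C, hW, hC, hW0, hWw, hCc, hW1, hcross⟩ :=
        exists_motion_crossing_iff (f := f) hw (neg_ne_zero.mpr hv) 
          (by rw [map_neg, neg_eq_zero]; exact hfv) c (-c')
      have hflip : ∀ s, (⟪s, w⟫ - c) * (⟪s, -v⟫ - -c') ≤ 0 ↔ 0 ≤ (⟪s, w⟫ - c) * (⟪s, v⟫ - c') :=
        fun s => by rw [inner_neg_right]; constructor <;> intro h <;> linarith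
      exact ⟨W, C, hW, hC, hW0, hWw, hCc, hW1, by simp_rw [hcross, hflip]⟩
    · obtain ⟨W, C, hW, hC, hW0, hWw, hCc, hW1, hcross⟩ :=
        exists_motion_crossing_iff (f := f) hw hv hfv c c'
      exact ⟨W, C, hW, hC, hW0, hWw, hCc, hW1, by simp_rw [hcross]⟩
  · rintro m ⟨W, C, hW, hC, hW0, hWw, hCc, hW1, rfl⟩
    refine ⟨_, ⟨W 1, C 1, hW0 1 ⟨zero_le_one, le_rfl⟩, hW1, Or.inr rfl⟩,
      Set.ncard_le_ncard ?_ (S.finite_toSet.subset (Set.sep_subset _ _))⟩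
    rintro s ⟨hs, hwedge⟩
    exact ⟨hs, exists_mem_Icc_inner_eq_of_mul_nonpos hW hC (by rwa [hWw, hCc])⟩
end
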